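/- Let S_r ≥ S_t > 0, let τ ∈ (0, 1), and let R_r, R_t ≥ 0 be target rates achievable under OMA, i.e., R_r ≤ τ·log₂(1 + S_r) and R_t ≤ (1 − τ)·log₂(1 + S_t). Then there exists a NOMA power split p_r ∈ [0, 1] with p_t = 1 − p_r such that log₂(1 + p_r·S_r) ≥ R_r and log₂(1 + p_t·S_t/(p_r·S_t + 1)) ≥ R_t; moreover the SIC condition log₂(1 + p_t·S_r/(p_r·S_r + 1)) ≥ R_t is also satisfied. Hence any OMA-achievable rate pair is NOMA-achievable with decoding order determined by the stronger link. -/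

import Mathlib

open Real Set

/-!
Choose `p_r` so that `1 + p_r S_r = (1 + S_r)^τ`: the strong user then gets exactly its OMA rate,
and its SINR when decoding the weak user's signal is `(1 + S_r) / (1 + S_r)^τ = (1 + S_r)^(1-τ)`,
worth `(1 - τ) log₂ (1 + S_r) ≥ (1 - τ) log₂ (1 + S_t)`. For the weak user one needs
`1 + p_r S_t ≤ (1 + S_t)^τ`, i.e. `((1 + S_r)^τ - 1) / S_r ≤ ((1 + S_t)^τ - 1) / S_t`: the
secant slopes of the concave map `x ↦ x^τ` from `x = 1` decrease.
-/

lemma one_add_rpow_sub_one_div_antitone {τ s t : ℝ} (hτ0 : 0 ≤ τ) (hτ1 : τ ≤ 1) (hs : 0 < s)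
    (hst : s ≤ t) : ((1 + t) ^ τ - 1) / t ≤ ((1 + s) ^ τ - 1) / s := by
  have hsecant := (concaveOn_rpow hτ0 hτ1).neg.secant_mono (a := 1) (x := 1 + s) (y := 1 + t)
    (by simp) (by simp only [mem_Ici]; linarith) (by simp only [mem_Ici]; linarith)
    (by linarith) (by linarith) (by linarith)
  simp only [Pi.neg_apply, one_rpow, add_sub_cancel_left, neg_sub_neg] at hsecant
  rwa [← neg_le_neg_iff, ← neg_div, ← neg_div, neg_sub, neg_sub]

lemma one_add_one_sub_mul_div_mul_add_one {p S : ℝ} (h : p * S + 1 ≠ 0) :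
    1 + (1 - p) * S / (p * S + 1) = (1 + S) / (1 + p * S) := by
  rw [add_comm 1 (p * S)]
  field_simp
  ring

lemma logb_div_rpow_self (b : ℝ) {x : ℝ} (hx : 0 < x) (τ : ℝ) :
    logb b (x / x ^ τ) = (1 - τ) * logb b x := by
  rw [← logb_rpow_eq_mul_logb_of_pos hx, rpow_sub hx, rpow_one]

noncomputable def omaMatchingPowerSplit (τ S : ℝ) : ℝ := ((1 + S) ^ τ - 1) / S

section omaMatchingPowerSplit

variable {τ S : ℝ}

lemma one_add_omaMatchingPowerSplit_mul (hS : S ≠ 0) :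
    1 + omaMatchingPowerSplit τ S * S = (1 + S) ^ τ := by
  rw [omaMatchingPowerSplit, div_mul_cancel₀ _ hS]
  ring

lemma omaMatchingPowerSplit_mem_Icc (hτ0 : 0 ≤ τ) (hτ1 : τ ≤ 1) (hS : 0 < S) :
    omaMatchingPowerSplit τ S ∈ Icc 0 1 := by
  have h1S : 1 ≤ 1 + S := by linarith
  refine ⟨div_nonneg (by linarith [one_le_rpow h1S hτ0]) hS.le, (div_le_one hS).2 ?_⟩
  linarith [rpow_le_self_of_one_le h1S hτ1]

lemma one_add_omaMatchingPowerSplit_mul_le {S' : ℝ} (hτ0 : 0 ≤ τ) (hτ1 : τ ≤ 1) (hS' : 0 < S')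
    (hS'S : S' ≤ S) : 1 + omaMatchingPowerSplit τ S * S' ≤ (1 + S') ^ τ := by
  have h := one_add_rpow_sub_one_div_antitone hτ0 hτ1 hS' hS'S
  rw [← omaMatchingPowerSplit, le_div_iff₀ hS'] at h
  linarith

end omaMatchingPowerSplit

theorem noma_dominates_oma_general
    (Sr St τ Rr Rt : ℝ) (hS : Sr ≥ St) (hSt : 0 < St)
    (hτ : τ ∈ Set.Ioo (0:ℝ) 1)
    (hOMAr : Rr ≤ τ * Real.logb 2 (1 + Sr))
    (hOMAt : Rt ≤ (1 - τ) * Real.logb 2 (1 + St)) :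
    ∃ pr ∈ Set.Icc (0:ℝ) 1,
      Real.logb 2 (1 + pr * Sr) ≥ Rr
      ∧ Real.logb 2 (1 + (1 - pr) * St / (pr * St + 1)) ≥ Rt
      ∧ Real.logb 2 (1 + (1 - pr) * Sr / (pr * Sr + 1)) ≥ Rt := by
  obtain ⟨hτ0, hτ1⟩ := hτ
  have hSr : 0 < Sr := hSt.trans_le hS
  set pr := omaMatchingPowerSplit τ Sr
  have hpr : pr ∈ Icc 0 1 := omaMatchingPowerSplit_mem_Icc hτ0.le hτ1.le hSr
  have hpr0 : 0 ≤ pr := hpr.1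
  have hstrong : 1 + pr * Sr = (1 + Sr) ^ τ := one_add_omaMatchingPowerSplit_mul hSr.ne'
  have hweak : 1 + pr * St ≤ (1 + St) ^ τ :=
    one_add_omaMatchingPowerSplit_mul_le hτ0.le hτ1.le hSt hS
  refine ⟨pr, hpr, ?_, ?_, ?_⟩
  · rwa [hstrong, logb_rpow_eq_mul_logb_of_pos (by linarith)]
  · rw [one_add_one_sub_mul_div_mul_add_one (by positivity)]
    calc Rt ≤ (1 - τ) * logb 2 (1 + St) := hOMAt
      _ = logb 2 ((1 + St) / (1 + St) ^ τ) := (logb_div_rpow_self 2 (by linarith) τ).symm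
      _ ≤ logb 2 ((1 + St) / (1 + pr * St)) := by
        gcongr
        norm_num
  · rw [one_add_one_sub_mul_div_mul_add_one (by positivity), hstrong,
      logb_div_rpow_self 2 (by linarith) τ]
    calc Rt ≤ (1 - τ) * logb 2 (1 + St) := hOMAt
      _ ≤ (1 - τ) * logb 2 (1 + Sr) := by
        gcongr
        linarith

/-- NOMA dominates OMA: if `S_r ≥ S_t > 0` and the rate pair `(R_r, R_t)` is
OMA-achievable with time fraction `τ ∈ (0,1)`, then there is a NOMA power split
`p_r ∈ [0,1]`, `p_t = 1 − p_r`, achieving both targets with feasible SIC at the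
strong user. -/
theorem noma_dominates_oma
    (Sr St τ Rr Rt : ℝ) (hS : Sr ≥ St) (hSt : 0 < St)
    (hτ : τ ∈ Set.Ioo (0:ℝ) 1) (hRr : 0 ≤ Rr) (hRt : 0 ≤ Rt)
    (hOMAr : Rr ≤ τ * Real.logb 2 (1 + Sr))
    (hOMAt : Rt ≤ (1 - τ) * Real.logb 2 (1 + St)) :
    ∃ pr ∈ Set.Icc (0:ℝ) 1,
      Real.logb 2 (1 + pr * Sr) ≥ Rr
      ∧ Real.logb 2 (1 + (1 - pr) * St / (pr * St + 1)) ≥ Rt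
      ∧ Real.logb 2 (1 + (1 - pr) * Sr / (pr * Sr + 1)) ≥ Rt :=
  noma_dominates_oma_general Sr St τ Rr Rt hS hSt hτ hOMAr hOMAt
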